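/- Let D be a distribution on a finite set X × {0,1}, let S ∼ D^N with P(S consistent) > 0, and let A be a (possibly randomized) interpolating learning rule taking values in a finite set H ∪ {⋆} of hypotheses h : X → {0,1} plus a token ⋆: A(S) satisfies L_S(A(S)) = 0 whenever S is consistent, and A(S) = ⋆ whenever S is inconsistent. Then E_{S,A(S)}[L_D(A(S)) | S consistent] ≤ 1 − 2^{−I(S; A(S))/(N·P(S consistent))}, where I(S; A(S)) is the mutual information (in bits) between the random training set S and the random output A(S), and L_D(h) = P_{(X,Y)∼D}(h(X) ≠ Y). -/

import Mathlib

open Finset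

/-- A probability distribution on a finite type, given by its mass function. -/
structure FinDist (α : Type*) [Fintype α] where
  p : α → ℝ
  nonneg : ∀ a, 0 ≤ p a
  sum_one : ∑ a, p a = 1

namespace FinDist

variable {α : Type*} [Fintype α]

/-- Probability of an event. -/
noncomputable def prob (D : FinDist α) (E : Set α) : ℝ :=
  ∑ a, E.indicator D.p a

/-- Expectation of a real-valued random variable. -/
noncomputable def expect (D : FinDist α) (f : α → ℝ) : ℝ :=
  ∑ a, D.p a * f a

/-- The `N`-fold i.i.d. product of a distribution (the law of an i.i.d. sample). -/
noncomputable def pow (D : FinDist α) (N : ℕ) : FinDist (Fin N → α) where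
  p := fun s => ∏ i, D.p (s i)
  nonneg := fun s => Finset.prod_nonneg fun i _ => D.nonneg _
  sum_one := by
    classical
    rw [← Fintype.sum_pow D.p N, D.sum_one, one_pow]

end FinDist

/-- A training set is consistent if equal inputs receive equal labels. -/
def ConsistentS {X : Type*} {N : ℕ} (s : Fin N → X × Bool) : Prop :=
  ∀ i j, (s i).1 = (s j).1 → (s i).2 = (s j).2

/-- A hypothesis interpolates a training set if it fits every sample
(zero empirical risk). -/
def Interpolates {X : Type*} {N : ℕ} (h : X → Bool) (s : Fin N → X × Bool) : Prop :=
  ∀ i, h (s i).1 = (s i).2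

/-- Population risk (generalization error) of a hypothesis. -/
noncomputable def risk {X : Type*} [Fintype X] (D : FinDist (X × Bool)) (h : X → Bool) : ℝ :=
  D.prob {a | h a.1 ≠ a.2}

/-- Peak marginal probability `D_max = max_x P(X = x)`. -/
noncomputable def dmax {X : Type*} [Fintype X] (D : FinDist (X × Bool)) : ℝ :=
  ⨆ x : X, D.prob {a | a.1 = x}

/-- Binary entropy function (base-2). -/
noncomputable def binEnt (x : ℝ) : ℝ :=
  -(x * Real.logb 2 x) - (1 - x) * Real.logb 2 (1 - x)

/-- Risk extended to `Option`, where `none` is the token `⋆` with prescribed risk `rstar`. -/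
noncomputable def riskO {X : Type*} [Fintype X] (D : FinDist (X × Bool)) (rstar : ℝ) :
    Option (X → Bool) → ℝ
  | some h => risk D h
  | none => rstar

/-- Mutual information (in bits) between the two coordinates of a joint
finitely supported distribution. -/
noncomputable def mutInfo {α β : Type*} [Fintype α] [Fintype β] (q : FinDist (α × β)) : ℝ :=
  ∑ u : α, ∑ v : β, q.p (u, v) *
    Real.logb 2 (q.p (u, v) / ((∑ v' : β, q.p (u, v')) * (∑ u' : α, q.p (u', v))))

open scoped Classical

/-!
The rule can output `h` only on samples that `h` interpolates, an event of probability
`(1 - L_D(h))^N` under `D^N`. Applying the log-sum inequality to each output value therefore bounds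
the mutual information below by `N · Σ_h P(A(S) = h) · log₂ (1 / (1 - L_D(h)))`. Since
`Σ_h P(A(S) = h) = P(S consistent)`, Jensen's inequality for the convex map `x ↦ 2^x`, applied with
the weights `P(A(S) = h) / P(S consistent)`, turns this into the bound on the conditional risk.
-/

namespace FinDist

variable {α : Type*} [Fintype α]

lemma prob_nonneg (D : FinDist α) (E : Set α) : 0 ≤ D.prob E :=
  Finset.sum_nonneg fun a _ => Set.indicator_nonneg (fun a _ => D.nonneg a) a

lemma prob_univ (D : FinDist α) : D.prob Set.univ = 1 := by
  rw [prob, Set.indicator_univ, D.sum_one]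

lemma prob_compl (D : FinDist α) (E : Set α) : D.prob Eᶜ = 1 - D.prob E := by
  rw [← D.sum_one, prob, prob, ← Finset.sum_sub_distrib]
  exact Finset.sum_congr rfl fun a _ => by by_cases ha : a ∈ E <;> simp [ha]

lemma pow_prob_pi (D : FinDist α) (N : ℕ) (E : Set α) :
    (D.pow N).prob {s | ∀ i, s i ∈ E} = D.prob E ^ N := by
  rw [prob, prob, Fintype.sum_pow]
  refine Finset.sum_congr rfl fun s _ => ?_
  by_cases hs : ∀ i, s i ∈ E
  · simp only [Set.indicator_of_mem (show s ∈ {s | ∀ i, s i ∈ E} from hs),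
      Set.indicator_of_mem (hs _)]
    rfl
  · obtain ⟨i, hi⟩ := not_forall.1 hs
    rw [Set.indicator_of_notMem (show s ∉ {s | ∀ i, s i ∈ E} from hs),
      Finset.prod_eq_zero (Finset.mem_univ i) (Set.indicator_of_notMem hi _)]

end FinDist

lemma one_sub_risk {X : Type*} [Fintype X] (D : FinDist (X × Bool)) (h : X → Bool) :
    1 - risk D h = D.prob {a | h a.1 = a.2} := by
  rw [risk, show {a | h a.1 ≠ a.2} = {a : X × Bool | h a.1 = a.2}ᶜ from rfl,
    FinDist.prob_compl, sub_sub_cancel]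

lemma prob_interpolates {X : Type*} [Fintype X] (D : FinDist (X × Bool)) (N : ℕ)
    (h : X → Bool) : (D.pow N).prob {s | Interpolates h s} = (1 - risk D h) ^ N := by
  rw [one_sub_risk, ← FinDist.pow_prob_pi]
  rfl

lemma mul_log_sub_mul_log_div_le {a b c : ℝ} (ha : 0 ≤ a) (hb : 0 ≤ b) (hba : b = 0 → a = 0)
    (hc : 0 < c) : a * Real.log c - a * Real.log (a / b) ≤ c * b - a := by
  rcases ha.eq_or_lt with rfl | ha
  · simpa using mul_nonneg hc.le hb
  have hb : 0 < b := hb.lt_of_ne fun h => ha.ne' (hba h.symm)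
  have key := Real.log_le_sub_one_of_pos (show 0 < c * b / a by positivity)
  rw [Real.log_div (by positivity) ha.ne', Real.log_mul hc.ne' hb.ne'] at key
  rw [Real.log_div ha.ne' hb.ne']
  have hexpand : a * (c * b / a - 1) = c * b - a := by field_simp
  linarith [mul_le_mul_of_nonneg_left key ha.le]

theorem sum_mul_log_div_sum_le {ι : Type*} [Fintype ι] {a b : ι → ℝ} (ha : ∀ i, 0 ≤ a i)
    (hb : ∀ i, 0 ≤ b i) (hba : ∀ i, b i = 0 → a i = 0) :
    (∑ i, a i) * Real.log ((∑ i, a i) / ∑ i, b i) ≤ ∑ i, a i * Real.log (a i / b i) := by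
  rcases (Finset.sum_nonneg fun i _ => ha i).eq_or_lt with hA | hA
  · rw [← hA, zero_mul]
    have hzero := (Finset.sum_eq_zero_iff_of_nonneg fun i _ => ha i).1 hA.symm
    exact (Finset.sum_eq_zero fun i hi => by rw [hzero i hi, zero_mul]).ge
  have hB : 0 < ∑ i, b i := by
    refine (Finset.sum_nonneg fun i _ => hb i).lt_of_ne fun hB => hA.ne' ?_
    have hzero := (Finset.sum_eq_zero_iff_of_nonneg fun i _ => hb i).1 hB.symm
    exact Finset.sum_eq_zero fun i hi => hba i (hzero i hi)
  have hsum := Finset.sum_le_sum fun i (_ : i ∈ Finset.univ) =>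
    mul_log_sub_mul_log_div_le (ha i) (hb i) (hba i) (div_pos hA hB)
  rw [Finset.sum_sub_distrib, Finset.sum_sub_distrib, ← Finset.sum_mul, ← Finset.mul_sum,
    div_mul_cancel₀ _ hB.ne', sub_self] at hsum
  linarith

theorem sum_mul_logb_div_sum_le {ι : Type*} [Fintype ι] {B : ℝ} (hB : 1 ≤ B) {a b : ι → ℝ}
    (ha : ∀ i, 0 ≤ a i) (hb : ∀ i, 0 ≤ b i) (hba : ∀ i, b i = 0 → a i = 0) :
    (∑ i, a i) * Real.logb B ((∑ i, a i) / ∑ i, b i) ≤ ∑ i, a i * Real.logb B (a i / b i) := by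
  simp only [Real.logb, ← mul_div_assoc, ← Finset.sum_div]
  exact div_le_div_of_nonneg_right (sum_mul_log_div_sum_le ha hb hba) (Real.log_nonneg hB)

section MutualInformation

variable {α β : Type*} [Fintype α] [Fintype β]

lemma apply_le_of_sum_snd_eq (q : FinDist (α × β)) (p : FinDist α)
    (hp : ∀ u, ∑ v, q.p (u, v) = p.p u) (u : α) (v : β) : q.p (u, v) ≤ p.p u :=
  hp u ▸ Finset.single_le_sum (fun v _ => q.nonneg (u, v)) (Finset.mem_univ v)

lemma sum_le_prob_of_support (q : FinDist (α × β)) (p : FinDist α)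
    (hp : ∀ u, ∑ v, q.p (u, v) = p.p u) {v : β} {E : Set α}
    (hE : ∀ u, q.p (u, v) ≠ 0 → u ∈ E) : ∑ u, q.p (u, v) ≤ p.prob E := by
  refine Finset.sum_le_sum fun u _ => ?_
  by_cases hq : q.p (u, v) = 0
  · exact hq ▸ Set.indicator_nonneg (fun u _ => p.nonneg u) u
  · rw [Set.indicator_of_mem (hE u hq)]
    exact apply_le_of_sum_snd_eq q p hp u v

/-- The log-sum inequality against the reference weights `1_E(u) · p(u) · P(V = v)`. -/
lemma mul_neg_logb_prob_le_sum_mul_logb (q : FinDist (α × β)) (p : FinDist α)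
    (hp : ∀ u, ∑ v, q.p (u, v) = p.p u) (v : β) {E : Set α}
    (hE : ∀ u, q.p (u, v) ≠ 0 → u ∈ E) :
    (∑ u, q.p (u, v)) * -Real.logb 2 (p.prob E) ≤
      ∑ u, q.p (u, v) * Real.logb 2 (q.p (u, v) / (p.p u * ∑ u', q.p (u', v))) := by
  set r := ∑ u, q.p (u, v)
  have hr : 0 ≤ r := Finset.sum_nonneg fun u _ => q.nonneg (u, v)
  have hlogsum := sum_mul_logb_div_sum_le one_le_two (a := fun u => q.p (u, v))
    (b := fun u => E.indicator p.p u * r) (fun u => q.nonneg (u, v))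
    (fun u => mul_nonneg (Set.indicator_nonneg (fun u _ => p.nonneg u) u) hr) (by
      intro u hb
      by_contra hq
      rw [Set.indicator_of_mem (hE u hq)] at hb
      rcases mul_eq_zero.1 hb with h | h
      · exact hq (le_antisymm (h ▸ apply_le_of_sum_snd_eq q p hp u v) (q.nonneg _))
      · exact hq (le_antisymm (h ▸ Finset.single_le_sum (f := fun u => q.p (u, v))
          (fun u _ => q.nonneg (u, v)) (Finset.mem_univ u)) (q.nonneg _)))
  rw [← Finset.sum_mul] at hlogsum
  convert hlogsum using 1
  · rcases hr.eq_or_lt with hr0 | hr0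
    · simp [← hr0]
    · rw [div_mul_cancel_right₀ hr0.ne', Real.logb_inv]
      rfl
  · refine Finset.sum_congr rfl fun u _ => ?_
    by_cases hq : q.p (u, v) = 0
    · simp [hq]
    · rw [Set.indicator_of_mem (hE u hq)]

theorem sum_mul_neg_logb_prob_le_mutInfo (q : FinDist (α × β)) (p : FinDist α)
    (hp : ∀ u, ∑ v, q.p (u, v) = p.p u) (E : β → Set α)
    (hE : ∀ u v, q.p (u, v) ≠ 0 → u ∈ E v) :
    ∑ v, (∑ u, q.p (u, v)) * -Real.logb 2 (p.prob (E v)) ≤ mutInfo q := by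
  simp only [mutInfo, hp]
  rw [Finset.sum_comm]
  exact Finset.sum_le_sum fun v _ => mul_neg_logb_prob_le_sum_mul_logb q p hp v (hE · v)

end MutualInformation

theorem rpow_sum_mul_logb_le_sum_mul {ι : Type*} [Fintype ι] {b : ℝ} (hb : 0 < b) (hb1 : b ≠ 1)
    {w x : ι → ℝ} (hw : ∀ i, 0 ≤ w i) (hw1 : ∑ i, w i = 1) (hx : ∀ i, w i ≠ 0 → 0 < x i) :
    b ^ (∑ i, w i * Real.logb b (x i)) ≤ ∑ i, w i * x i := by
  have hjensen := (convexOn_rpow_left hb).map_sum_le (t := Finset.univ)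
    (p := fun i => Real.logb b (x i)) (fun i _ => hw i) hw1 (fun i _ => Set.mem_univ _)
  simp only [smul_eq_mul] at hjensen
  refine hjensen.trans_eq (Finset.sum_congr rfl fun i _ => ?_)
  rcases eq_or_ne (w i) 0 with hwi | hwi
  · simp [hwi]
  · rw [Real.rpow_logb hb hb1 (hx i hwi)]

theorem sum_mul_div_sum_le_one_sub_rpow {ι : Type*} [Fintype ι] {b : ℝ} (hb : 1 < b)
    {r L : ι → ℝ} {M c : ℝ} (hr : ∀ i, 0 ≤ r i) (hS : 0 < ∑ i, r i)
    (hL : ∀ i, r i ≠ 0 → L i < 1) (hc : 0 < c) (hM : -M ≤ c * ∑ i, r i * Real.logb b (1 - L i)) :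
    (∑ i, r i * L i) / ∑ i, r i ≤ 1 - b ^ (-M / (c * ∑ i, r i)) := by
  set S := ∑ i, r i
  have hw1 : ∑ i, r i / S = 1 := by rw [← Finset.sum_div, div_self hS.ne']
  calc (∑ i, r i * L i) / S = 1 - ∑ i, r i / S * (1 - L i) := by
        simp only [mul_one_sub, Finset.sum_sub_distrib, hw1, Finset.sum_div, mul_div_right_comm]
        ring
    _ ≤ 1 - b ^ (∑ i, r i / S * Real.logb b (1 - L i)) := by
        gcongr
        exact rpow_sum_mul_logb_le_sum_mul (by linarith) hb.ne'
          (fun i => div_nonneg (hr i) hS.le) hw1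
          fun i hw => sub_pos.2 (hL i (div_ne_zero_iff.1 hw).1)
    _ ≤ 1 - b ^ (-M / (c * S)) := by
        gcongr
        · exact hb.le
        calc -M / (c * S) ≤ (c * ∑ i, r i * Real.logb b (1 - L i)) / (c * S) := by gcongr
          _ = ∑ i, r i / S * Real.logb b (1 - L i) := by
              rw [mul_div_mul_left _ _ hc.ne', Finset.sum_div]
              simp only [div_mul_eq_mul_div]

section InterpolatingRule

variable {X : Type} [Fintype X] [DecidableEq X] {N : ℕ} (D : FinDist (X × Bool))
  (q : FinDist ((Fin N → X × Bool) × Option (X → Bool)))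

lemma sum_ite_consistent_mul_riskO_eq
    (hstar : ∀ s h, ¬ ConsistentS s → q.p (s, some h) = 0) :
    (∑ sh : (Fin N → X × Bool) × Option (X → Bool),
        (if ConsistentS sh.1 then q.p sh * riskO D 0 sh.2 else 0)) =
      ∑ h : X → Bool, (∑ s, q.p (s, some h)) * risk D h := by
  have hrow : ∀ s h, (if ConsistentS s then q.p (s, some h) * risk D h else 0) =
      q.p (s, some h) * risk D h := by
    intro s h
    split_ifs with hs
    · rfl
    · rw [hstar s h hs, zero_mul]
  simp only [Fintype.sum_prod_type, Fintype.sum_option, riskO, mul_zero, ite_self, zero_add,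
    hrow, Finset.sum_mul]
  exact Finset.sum_comm

lemma sum_sum_some_eq_prob_consistent
    (hmarg : ∀ s, ∑ h : Option (X → Bool), q.p (s, h) = (D.pow N).p s)
    (hnostar : ∀ s, ConsistentS s → q.p (s, none) = 0)
    (hstar : ∀ s h, ¬ ConsistentS s → q.p (s, some h) = 0) :
    ∑ h : X → Bool, ∑ s, q.p (s, some h) = (D.pow N).prob {s | ConsistentS s} := by
  rw [Finset.sum_comm]
  refine Finset.sum_congr rfl fun s _ => ?_
  by_cases hs : ConsistentS s
  · rw [Set.indicator_of_mem hs, ← hmarg s, Fintype.sum_option, hnostar s hs, zero_add]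
  · rw [Set.indicator_of_notMem hs, Finset.sum_eq_zero fun h _ => hstar s h hs]

lemma neg_mutInfo_le_mul_sum_mul_logb_one_sub_risk
    (hmarg : ∀ s, ∑ h : Option (X → Bool), q.p (s, h) = (D.pow N).p s)
    (hsupp : ∀ s h, q.p (s, some h) ≠ 0 → Interpolates h s) :
    -mutInfo q ≤ N * ∑ h : X → Bool, (∑ s, q.p (s, some h)) * Real.logb 2 (1 - risk D h) := by
  have := sum_mul_neg_logb_prob_le_mutInfo q (D.pow N) hmarg
    (fun v => v.elim Set.univ fun h => {s | Interpolates h s})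
    (by rintro s (_ | h) hq; exacts [Set.mem_univ s, hsupp s h hq])
  simp only [Fintype.sum_option, Option.elim, FinDist.prob_univ, Real.logb_one, mul_zero,
    zero_add, prob_interpolates, Real.logb_pow, mul_neg, Finset.sum_neg_distrib,
    mul_left_comm _ (N : ℝ), ← Finset.mul_sum] at this
  exact neg_le.1 this

lemma risk_lt_one_of_sum_ne_zero (hN : N ≠ 0)
    (hmarg : ∀ s, ∑ h : Option (X → Bool), q.p (s, h) = (D.pow N).p s)
    (hsupp : ∀ s h, q.p (s, some h) ≠ 0 → Interpolates h s) {h : X → Bool}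
    (hh : ∑ s, q.p (s, some h) ≠ 0) : risk D h < 1 := by
  have hle : ∑ s, q.p (s, some h) ≤ (1 - risk D h) ^ N := prob_interpolates D N h ▸
    sum_le_prob_of_support q (D.pow N) hmarg (hsupp · h)
  refine sub_pos.1 ((one_sub_risk D h ▸ FinDist.prob_nonneg _ _).lt_of_ne fun h0 => hh ?_)
  rw [← h0, zero_pow hN] at hle
  exact le_antisymm hle (Finset.sum_nonneg fun s _ => q.nonneg _)

end InterpolatingRule

/-- for any interpolating learning rule `A` (described by the joint law `q`
of `(S, A(S))`, with `A(S) = ⋆ = none` exactly on inconsistent samples and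
`A(S)` interpolating on consistent samples),
`E[L_D(A(S)) | S consistent] ≤ 1 − 2^{−I(S;A(S))/(N·P(S consistent))}`. -/
theorem interpolator_mutual_information_risk_bound
    (X : Type) [Fintype X] [DecidableEq X] (D : FinDist (X × Bool))
    (N : ℕ) (hN : 1 ≤ N)
    (q : FinDist ((Fin N → X × Bool) × Option (X → Bool)))
    (hmarg : ∀ s, ∑ h : Option (X → Bool), q.p (s, h) = (D.pow N).p s)
    (hinterp : ∀ s h, ConsistentS s → q.p (s, some h) ≠ 0 → Interpolates h s)
    (hnostar : ∀ s, ConsistentS s → q.p (s, none) = 0)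
    (hstar : ∀ s h, ¬ ConsistentS s → q.p (s, some h) = 0)
    (hcons : 0 < (D.pow N).prob {s | ConsistentS s}) :
    (∑ sh : (Fin N → X × Bool) × Option (X → Bool),
        (if ConsistentS sh.1 then q.p sh * riskO D 0 sh.2 else 0)) /
        (D.pow N).prob {s | ConsistentS s} ≤
      1 - (2 : ℝ) ^
        (-(mutInfo q) / ((N : ℝ) * (D.pow N).prob {s | ConsistentS s})) := by
  have hsupp : ∀ s h, q.p (s, some h) ≠ 0 → Interpolates h s := fun s h hq =>
    if hs : ConsistentS s then hinterp s h hs hq else absurd (hstar s h hs) hq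
  have hmass := sum_sum_some_eq_prob_consistent D q hmarg hnostar hstar
  rw [sum_ite_consistent_mul_riskO_eq D q hstar, ← hmass]
  exact sum_mul_div_sum_le_one_sub_rpow one_lt_two
    (fun h => Finset.sum_nonneg fun s _ => q.nonneg _) (hmass ▸ hcons) (fun h => risk_lt_one_of_sum_ne_zero D q (by omega) hmarg hsupp)
    (by exact_mod_cast hN) (neg_mutInfo_le_mul_sum_mul_logb_one_sub_risk D q hmarg hsupp)
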